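/- Let α, α′ ≥ 0, t > 0 and θ ∈ ℝ. Let M ∈ M₄(ℂ) (viewed as M₂(ℂ)⊗M₂(ℂ)) be the Hermitian matrix with diagonal (α, α′, t²α′, α), with (1,4)-entry −(α + α′t)e^{iθ} and (4,1)-entry −(α + α′t)e^{−iθ}, and all other entries zero. Suppose M = P + Q where P is positive semidefinite and the partial transpose Q^Γ is positive semidefinite. Then necessarily P is the matrix with diagonal (α, 0, 0, α), (1,4)-entry −αe^{iθ} and (4,1)-entry −αe^{−iθ} and zeros elsewhere, and Q is the matrix with diagonal (0, α′, t²α′, 0), (1,4)-entry −α′t e^{iθ} and (4,1)-entry −α′t e^{−iθ} and zeros elsewhere. -/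

import Mathlib

open Complex Matrix ComplexOrder

/-- Partial transpose (transpose in the first tensor factor) of a `4×4` matrix viewed as an
element of `M₂(ℂ) ⊗ M₂(ℂ)` in `2×2` block form. -/
def partialTranspose2 (Q : Matrix (Fin 4) (Fin 4) ℂ) : Matrix (Fin 4) (Fin 4) ℂ :=
  !![Q 0 0, Q 0 1, Q 2 0, Q 2 1;
     Q 1 0, Q 1 1, Q 3 0, Q 3 1;
     Q 0 2, Q 0 3, Q 2 2, Q 2 3;
     Q 1 2, Q 1 3, Q 3 2, Q 3 3]

/-!
The corner entries `P₀₃` and `Q₀₃` add up to the corner entry of `M`, of modulus `α + α' t`.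
The `2×2` minors of `P` on `{0, 3}` and of `Q^Γ` on `{1, 2}` (where `Q₀₃` sits in `Q^Γ`) bound
them by `|P₀₃| ≤ α` and `|Q₀₃| ≤ α' t`, because the diagonal entries of `P` and `Q` are
nonnegative and add up to those of `M`. So the triangle inequality is an equality, which pins
both corner entries and forces the minors to be tight: `P₀₀ = P₃₃ = α`, `Q₁₁ = α'`,
`Q₂₂ = t² α'`. Hence `P₁₁ = P₂₂ = 0`, rows and columns `1, 2` of `P` vanish, and `Q = M - P`.
-/

theorem eq_smul_of_add_eq_add_smul_of_norm_le {E : Type*} [NormedAddCommGroup E]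
    [NormedSpace ℝ E] [StrictConvexSpace ℝ E] {x y v : E} {a b : ℝ} (hv : ‖v‖ = 1)
    (hx : ‖x‖ ≤ a) (hy : ‖y‖ ≤ b) (h : x + y = (a + b) • v) : x = a • v ∧ y = b • v := by
  have ha : 0 ≤ a := (norm_nonneg x).trans hx
  have hb : 0 ≤ b := (norm_nonneg y).trans hy
  have hsum : ‖x + y‖ = a + b := by
    rw [h, norm_smul, hv, mul_one, Real.norm_of_nonneg (add_nonneg ha hb)]
  have hxa : ‖x‖ = a := by linarith [norm_add_le x y]
  have hyb : ‖y‖ = b := by linarith [norm_add_le x y]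
  have hray := (sameRay_iff_norm_add.mpr (by rw [hsum, hxa, hyb])).norm_smul_eq
  rw [hxa, hyb] at hray
  rcases (add_nonneg ha hb).eq_or_lt with hab | hab
  · obtain ⟨rfl, rfl⟩ : a = 0 ∧ b = 0 := by constructor <;> linarith
    exact ⟨by rw [zero_smul, ← norm_eq_zero, hxa], by rw [zero_smul, ← norm_eq_zero, hyb]⟩
  · have hx' : x = a • v := by
      refine smul_right_injective E hab.ne' (?_ : (a + b) • x = (a + b) • (a • v))
      rw [add_smul, ← hray, ← smul_add, h, smul_comm]
    exact ⟨hx', by rw [← add_sub_cancel_left x y, h, hx', add_smul, add_sub_cancel_left]⟩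

theorem eq_and_eq_of_mul_le_mul {x y a b : ℝ} (hx : 0 ≤ x) (hy : 0 ≤ y) (hxa : x ≤ a)
    (hyb : y ≤ b) (hab : 0 < a ↔ 0 < b) (h : a * b ≤ x * y) : x = a ∧ y = b := by
  rcases (hx.trans hxa).eq_or_lt with rfl | ha
  · have hb : b ≤ 0 := not_lt.mp (mt hab.mpr (lt_irrefl 0))
    constructor <;> linarith
  · have hb := hab.mp ha
    constructor <;> nlinarith

namespace Matrix.PosSemidef

variable {n 𝕜 : Type*} [RCLike 𝕜] {A : Matrix n n 𝕜}

open RCLike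

theorem re_diag_nonneg (hA : A.PosSemidef) (i : n) : 0 ≤ re (A i i) :=
  (nonneg_iff.mp hA.diag_nonneg).1

theorem norm_sq_apply_le (hA : A.PosSemidef) (i j : n) :
    ‖A i j‖ ^ 2 ≤ re (A i i) * re (A j j) := by
  classical
  have hdet := (hA.submatrix ![i, j]).det_nonneg
  have hji : A j i = star (A i j) := (hA.isHermitian.apply j i).symm
  rw [det_fin_two] at hdet
  simp only [submatrix_apply, cons_val_zero, cons_val_one, hji] at hdet
  rw [← hA.isHermitian.coe_re_apply_self i, ← hA.isHermitian.coe_re_apply_self j,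
    RCLike.star_def, RCLike.mul_conj, sub_nonneg] at hdet
  exact_mod_cast hdet

theorem norm_apply_le (hA : A.PosSemidef) {i j : n} {a b c : ℝ} (hi : re (A i i) ≤ a)
    (hj : re (A j j) ≤ b) (hc : 0 ≤ c) (habc : a * b = c ^ 2) : ‖A i j‖ ≤ c := by
  refine le_of_pow_le_pow_left₀ two_ne_zero hc ((hA.norm_sq_apply_le i j).trans ?_)
  rw [← habc]
  exact mul_le_mul hi hj (hA.re_diag_nonneg j) ((hA.re_diag_nonneg i).trans hi)

theorem re_diag_eq_of_mul_le_norm_sq (hA : A.PosSemidef) {i j : n} {a b : ℝ}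
    (hi : re (A i i) ≤ a) (hj : re (A j j) ≤ b) (hab : 0 < a ↔ 0 < b)
    (h : a * b ≤ ‖A i j‖ ^ 2) : re (A i i) = a ∧ re (A j j) = b :=
  eq_and_eq_of_mul_le_mul (hA.re_diag_nonneg i) (hA.re_diag_nonneg j) hi hj hab
    (h.trans (hA.norm_sq_apply_le i j))

theorem apply_eq_zero_of_re_diag_eq_zero (hA : A.PosSemidef) {j : n} (hj : re (A j j) = 0)
    (i : n) : A i j = 0 ∧ A j i = 0 := by
  have h1 := hA.norm_sq_apply_le i j
  have h2 := hA.norm_sq_apply_le j i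
  rw [hj, mul_zero] at h1
  rw [hj, zero_mul] at h2
  exact ⟨by simpa using h1.antisymm (sq_nonneg _), by simpa using h2.antisymm (sq_nonneg _)⟩

end Matrix.PosSemidef

theorem Matrix.PosSemidef.eq_of_re_diag_of_apply_zero_three {P : Matrix (Fin 4) (Fin 4) ℂ}
    (hP : P.PosSemidef) {a b : ℝ} {z : ℂ} (h0 : (P 0 0).re = a) (h1 : (P 1 1).re = 0)
    (h2 : (P 2 2).re = 0) (h3 : (P 3 3).re = b) (h03 : P 0 3 = z) :
    P = !![(a : ℂ), 0, 0, z; 0, 0, 0, 0; 0, 0, 0, 0; star z, 0, 0, (b : ℂ)] := by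
  have hrow1 := hP.apply_eq_zero_of_re_diag_eq_zero h1
  have hrow2 := hP.apply_eq_zero_of_re_diag_eq_zero h2
  have h00 : P 0 0 = a := by rw [← hP.isHermitian.coe_re_apply_self 0, ← h0]; rfl
  have h33 : P 3 3 = b := by rw [← hP.isHermitian.coe_re_apply_self 3, ← h3]; rfl
  have h30 : P 3 0 = star z := by rw [← hP.isHermitian.apply 3 0, h03]
  ext i j
  fin_cases i <;> fin_cases j <;>
    simp [h00, h33, h03, h30, (hrow1 _).1, (hrow1 _).2, (hrow2 _).1, (hrow2 _).2]

theorem partialTranspose2_apply_self (Q : Matrix (Fin 4) (Fin 4) ℂ) (i : Fin 4) :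
    partialTranspose2 Q i i = Q i i := by
  fin_cases i <;> rfl

theorem unique_decomposition (α α' t θ : ℝ) (hα : 0 ≤ α) (hα' : 0 ≤ α') (ht : 0 < t)
    (P Q : Matrix (Fin 4) (Fin 4) ℂ)
    (hM : P + Q =
      !![(α : ℂ), 0, 0, -((α : ℂ) + (α' : ℂ) * t) * exp (θ * I);
         0, (α' : ℂ), 0, 0;
         0, 0, (t : ℂ) ^ 2 * (α' : ℂ), 0;
         -((α : ℂ) + (α' : ℂ) * t) * exp (-θ * I), 0, 0, (α : ℂ)])
    (hP : P.PosSemidef) (hQ : (partialTranspose2 Q).PosSemidef) :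
    P = !![(α : ℂ), 0, 0, -(α : ℂ) * exp (θ * I);
           0, 0, 0, 0;
           0, 0, 0, 0;
           -(α : ℂ) * exp (-θ * I), 0, 0, (α : ℂ)] ∧
    Q = !![0, 0, 0, -(α' : ℂ) * t * exp (θ * I);
           0, (α' : ℂ), 0, 0;
           0, 0, (t : ℂ) ^ 2 * (α' : ℂ), 0;
           -(α' : ℂ) * t * exp (-θ * I), 0, 0, 0] := by
  have h00 : (P 0 0).re + (Q 0 0).re = α := by simpa using congrArg re (congrFun₂ hM 0 0)
  have h11 : (P 1 1).re + (Q 1 1).re = α' := by simpa using congrArg re (congrFun₂ hM 1 1)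
  have h22 : (P 2 2).re + (Q 2 2).re = t ^ 2 * α' := by
    simpa [← ofReal_pow] using congrArg re (congrFun₂ hM 2 2)
  have h33 : (P 3 3).re + (Q 3 3).re = α := by simpa using congrArg re (congrFun₂ hM 3 3)
  have h03 : P 0 3 + Q 0 3 = (α + α' * t) • -exp (θ * I) := by
    rw [← Matrix.add_apply, hM, real_smul]
    simp only [of_apply, cons_val', cons_val, cons_val_fin_one, cons_val_zero, ofReal_add,
      ofReal_mul, neg_mul, mul_neg]
  have hQd (i : Fin 4) : 0 ≤ (Q i i).re := partialTranspose2_apply_self Q i ▸ hQ.re_diag_nonneg i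
  have hPd (i : Fin 4) : 0 ≤ (P i i).re := hP.re_diag_nonneg i
  have hαt : 0 ≤ α' * t := by positivity
  have hP0 : (P 0 0).re ≤ α := by linarith [hQd 0]
  have hP3 : (P 3 3).re ≤ α := by linarith [hQd 3]
  have hQ1 : (Q 1 1).re ≤ α' := by linarith [hPd 1]
  have hQ2 : (Q 2 2).re ≤ t ^ 2 * α' := by linarith [hPd 2]
  have hu : ‖-exp (θ * I)‖ = 1 := by simp [norm_exp]
  obtain ⟨hP03, hQ03⟩ := eq_smul_of_add_eq_add_smul_of_norm_le hu
    (hP.norm_apply_le hP0 hP3 hα (sq α).symm)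
    (hQ.norm_apply_le (i := 2) (j := 1) hQ2 hQ1 hαt (by ring) : ‖Q 0 3‖ ≤ α' * t) h03
  obtain ⟨hP00, hP33⟩ : (P 0 0).re = α ∧ (P 3 3).re = α :=
    hP.re_diag_eq_of_mul_le_norm_sq hP0 hP3 Iff.rfl
      (by rw [hP03, norm_smul, hu, mul_one, Real.norm_of_nonneg hα, sq])
  obtain ⟨hQ22, hQ11⟩ : (Q 2 2).re = t ^ 2 * α' ∧ (Q 1 1).re = α' :=
    hQ.re_diag_eq_of_mul_le_norm_sq (i := 2) (j := 1) hQ2 hQ1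
      (mul_pos_iff_of_pos_left (by positivity))
      (le_of_eq (by rw [hQ03, norm_smul, hu, mul_one, Real.norm_of_nonneg hαt]; ring))
  have hstar : star (-(α : ℂ) * exp (θ * I)) = -α * exp (-θ * I) := by
    simp [← exp_conj]
  have hP_eq := hP.eq_of_re_diag_of_apply_zero_three (z := -α * exp (θ * I)) hP00
    (by linarith) (by linarith) hP33 (by rw [hP03, real_smul, mul_neg, neg_mul])
  rw [hstar] at hP_eq
  refine ⟨hP_eq, ?_⟩
  rw [eq_sub_of_add_eq' hM, hP_eq]
  ext i j
  fin_cases i <;> fin_cases j <;> simp <;> ring
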